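/- Let m : Index ⇀ V be a finite partial map with [] ∈ dom(m), x a variable storing m, and T : Index ⇀ V a finite partial map. Define the updated map m' by m'(i) = T(i) if i ∈ dom(T), undefined if i ∈ dom(T)↑ \ dom(T), and m(i) otherwise. Then for every index i: extend(m')(i) = extend(T)(i) if i ∈ dom(T)↑, and extend(m')(i) = extend(m)(i) otherwise. Equivalently, extend(m') = extend(m)[extend(T)], the update of extend(m) by the partial function extend(T). -/

import Mathlib

/-- An index: a finite sequence of string-integer pairs with no repeated string. -/
def Index : Type := {l : List (String × ℤ) // (l.map Prod.fst).Nodup}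

/-- The prefix order on indices. -/
def Index.pre (i j : Index) : Prop := i.1 <+: j.1

/-- The empty index. -/
def emptyIdx : Index := ⟨[], by simp⟩

/-- Downward closure of a single index. -/
def down (k : Index) : Set Index := {i | Index.pre i k}

/-- Downward closure of a set of indices. -/
def downSet (L : Set Index) : Set Index := {j | ∃ l ∈ L, Index.pre j l}

/-- Upward closure of a set of indices. -/
def upSet (L : Set Index) : Set Index := {j | ∃ l ∈ L, Index.pre l j}

/-- `m` is the ⊑-greatest element of `S`. -/
def greatestIn (S : Set Index) (m : Index) : Prop := m ∈ S ∧ ∀ s ∈ S, Index.pre s m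

/-- Domain of a partial map represented as an `Option`-valued function. -/
def pdom {V : Type*} (f : Index → Option V) : Set Index := {i | f i ≠ none}

open Classical in
/-- `extend(f)(i) = f(max(dom f ∩ i↓))` when the maximum exists; undefined otherwise. -/
noncomputable def extendFun {V : Type*} (f : Index → Option V) (i : Index) : Option V :=
  if h : ∃ m, greatestIn (pdom f ∩ down i) m then f h.choose else none

open Classical in
/-- The update of `f` by `T`: `T i` on `dom T`, undefined on `(dom T)↑ \ dom T`,
`f i` otherwise. -/
noncomputable def updateMap {V : Type*} (f T : Index → Option V) : Index → Option V :=
  fun i => if i ∈ pdom T then T i else if i ∈ upSet (pdom T) then none else f i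

/-- Pointwise sum of two real tensors. -/
def oplus (T T' : Index → Option ℝ) : Index → Option ℝ := fun i =>
  match T i, T' i with
  | some a, some b => some (a + b)
  | some a, none => some a
  | none, some b => some b
  | none, none => none

/-- A coupling: a partial bijection on indices that agrees on shared strings. -/
def Coupling (R : Index → Index → Prop) : Prop :=
  (∀ i₀ i₁ j, R i₀ j → R i₁ j → i₀ = i₁) ∧
  (∀ i j₀ j₁, R i j₀ → R i j₁ → j₀ = j₁) ∧
  (∀ i₀ i₁, R i₀ i₁ → ∀ (α : String) (v₀ v₁ : ℤ),
    (α, v₀) ∈ i₀.1 → (α, v₁) ∈ i₁.1 → v₀ = v₁)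

/-- The relation `P(R)` on sets of indices induced by a coupling `R`. -/
def PRel (R : Index → Index → Prop) (L₀ L₁ : Set Index) : Prop :=
  ∀ i₀ i₁, R i₀ i₁ →
    ((i₀ ∈ upSet L₀ ↔ i₁ ∈ upSet L₁) ∧
     (i₀ ∈ upSet L₀ → ∃ m₀ m₁, greatestIn (L₀ ∩ down i₀) m₀ ∧
        greatestIn (L₁ ∩ down i₁) m₁ ∧ R m₀ m₁))

/-- The relation `[R ⇀ Δ_V]` / `Tensor_V(R)` on partial maps. -/
def TensorRel {V : Type*} (R : Index → Index → Prop) (T₀ T₁ : Index → Option V) : Prop :=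
  ∀ i₀ i₁, R i₀ i₁ →
    ((i₀ ∈ pdom T₀ ↔ i₁ ∈ pdom T₁) ∧ (i₀ ∈ pdom T₀ → T₀ i₀ = T₁ i₁))

/-- The relation `Tensor†_V(R)` on partial maps (via `extend`). -/
def TensorDagRel {V : Type*} (R : Index → Index → Prop) (T₀ T₁ : Index → Option V) : Prop :=
  ∀ i₀ i₁, R i₀ i₁ →
    ((i₀ ∈ upSet (pdom T₀) ↔ i₁ ∈ upSet (pdom T₁)) ∧
     (i₀ ∈ upSet (pdom T₀) → extendFun T₀ i₀ = extendFun T₁ i₁))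

/-- A well-formed state: each variable stores a finite partial map containing `[]`
in its domain. -/
def WFState {Var V : Type*} (σ : Var → Index → Option V) : Prop :=
  ∀ y, (pdom (σ y)).Finite ∧ emptyIdx ∈ pdom (σ y)

/-- The relation `State(R)` on states. -/
def StateRel {Var V : Type*} (R : Index → Index → Prop)
    (σ₀ σ₁ : Var → Index → Option V) : Prop :=
  ∀ x, TensorDagRel R (σ₀ x) (σ₁ x)

/-- The state update `σ[x : T]`. -/
noncomputable def updState {Var V : Type*} [DecidableEq Var]
    (σ : Var → Index → Option V) (x : Var) (T : Index → Option V) :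
    Var → Index → Option V :=
  fun y => if y = x then updateMap (σ y) T else σ y

/-- An antichain of indices: no two distinct elements are ⊑-comparable. -/
def IsAntichainIdx (A : Set Index) : Prop :=
  ∀ i ∈ A, ∀ j ∈ A, Index.pre i j → i = j


namespace Index

lemma pre_antisymm {i j : Index} (hij : i.pre j) (hji : j.pre i) : i = j :=
  Subtype.ext (hij.sublist.antisymm hji.sublist)

lemma pre_total_of_pre {i j k : Index} (hik : i.pre k) (hjk : j.pre k) : i.pre j ∨ j.pre i :=
  List.prefix_or_prefix_of_prefix hik hjk

end Index

lemma greatestIn.unique {S : Set Index} {g₀ g₁ : Index}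
    (h₀ : greatestIn S g₀) (h₁ : greatestIn S g₁) : g₀ = g₁ :=
  Index.pre_antisymm (h₁.2 _ h₀.1) (h₀.2 _ h₁.1)

/-- Below a fixed index the prefix order is a chain, so a maximal-length element is greatest. -/
lemma exists_greatestIn_of_subset_down {S : Set Index} {i : Index} (hS : S.Finite)
    (hne : S.Nonempty) (hsub : S ⊆ down i) : ∃ g, greatestIn S g := by
  obtain ⟨g, hg, hmax⟩ := hS.exists_maximalFor (fun j : Index => j.1.length) S hne
  refine ⟨g, hg, fun s hs => ?_⟩
  rcases Index.pre_total_of_pre (hsub hs) (hsub hg) with hsg | hgs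
  · exact hsg
  · have hlen := le_antisymm hgs.length_le (hmax hs hgs.length_le)
    obtain rfl : g = s := Subtype.ext (hgs.eq_of_length hlen)
    exact List.prefix_refl _

section extendFun

variable {V : Type*}

lemma extendFun_eq_of_greatestIn {f : Index → Option V} {i g : Index}
    (hg : greatestIn (pdom f ∩ down i) g) : extendFun f i = f g := by
  have hex : ∃ g, greatestIn (pdom f ∩ down i) g := ⟨g, hg⟩
  rw [extendFun, dif_pos hex, hex.choose_spec.unique hg]

lemma extendFun_congr_of_eqOn_down {f f' : Index → Option V} {i : Index}
    (hff' : ∀ j ∈ down i, f j = f' j) : extendFun f i = extendFun f' i := by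
  have hdom : pdom f ∩ down i = pdom f' ∩ down i :=
    Set.ext fun j => and_congr_left fun hji => by simp only [pdom, Set.mem_ofPred_eq, hff' j hji]
  unfold extendFun
  rw [hdom]
  split
  · next hex => exact hff' _ hex.choose_spec.1.2
  · rfl

end extendFun

section updateMap

variable {V : Type*} {f T : Index → Option V}

lemma updateMap_of_mem_pdom {j : Index} (hj : j ∈ pdom T) : updateMap f T j = T j := by
  rw [updateMap, if_pos hj]

lemma updateMap_eq_none_of_mem_upSet_of_notMem_pdom {j : Index} (hup : j ∈ upSet (pdom T))
    (hj : j ∉ pdom T) : updateMap f T j = none := by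
  rw [updateMap, if_neg hj, if_pos hup]

lemma updateMap_eqOn_down_of_notMem_upSet {i : Index} (hi : i ∉ upSet (pdom T)) :
    ∀ j ∈ down i, updateMap f T j = f j := by
  intro j hji
  have hjT : j ∉ pdom T := fun hj => hi ⟨j, hj, hji⟩
  have hjup : j ∉ upSet (pdom T) := fun ⟨l, hl, hlj⟩ => hi ⟨l, hl, hlj.trans hji⟩
  rw [updateMap, if_neg hjT, if_neg hjup]

/-- Everything above a point of `dom T` is either in `dom T` or erased by the update,
so the last point of `dom T` below `i` stays the last point of the updated domain. -/
lemma greatestIn_pdom_updateMap {i g : Index} (hg : greatestIn (pdom T ∩ down i) g) :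
    greatestIn (pdom (updateMap f T) ∩ down i) g := by
  obtain ⟨⟨hgT, hgi⟩, hgmax⟩ := hg
  refine ⟨⟨?_, hgi⟩, fun s ⟨hs, hsi⟩ => ?_⟩
  · rw [pdom, Set.mem_ofPred_eq, updateMap_of_mem_pdom hgT]
    exact hgT
  · rcases Index.pre_total_of_pre hsi hgi with hsg | hgs
    · exact hsg
    · by_cases hsT : s ∈ pdom T
      · exact hgmax s ⟨hsT, hsi⟩
      · exact absurd (updateMap_eq_none_of_mem_upSet_of_notMem_pdom ⟨g, hgT, hgs⟩ hsT) hs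

lemma extendFun_updateMap_of_mem_upSet (hTfin : (pdom T).Finite) {i : Index}
    (hi : i ∈ upSet (pdom T)) : extendFun (updateMap f T) i = extendFun T i := by
  obtain ⟨l, hlT, hli⟩ := hi
  obtain ⟨g, hg⟩ := exists_greatestIn_of_subset_down (hTfin.subset Set.inter_subset_left)
    ⟨l, hlT, hli⟩ Set.inter_subset_right
  rw [extendFun_eq_of_greatestIn (greatestIn_pdom_updateMap hg), extendFun_eq_of_greatestIn hg,
    updateMap_of_mem_pdom hg.1.1]

lemma extendFun_updateMap_of_notMem_upSet {i : Index} (hi : i ∉ upSet (pdom T)) :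
    extendFun (updateMap f T) i = extendFun f i :=
  extendFun_congr_of_eqOn_down (updateMap_eqOn_down_of_notMem_upSet hi)

end updateMap

theorem stmt5_general {V : Type*} (m T : Index → Option V)
    (hTfin : (pdom T).Finite) :
    ∀ i : Index,
      (i ∈ upSet (pdom T) → extendFun (updateMap m T) i = extendFun T i) ∧
      (i ∉ upSet (pdom T) → extendFun (updateMap m T) i = extendFun m i) :=
  fun _ => ⟨extendFun_updateMap_of_mem_upSet hTfin, extendFun_updateMap_of_notMem_upSet⟩

theorem stmt5 {V : Type*} (m T : Index → Option V)
    (hmfin : (pdom m).Finite) (h0 : emptyIdx ∈ pdom m)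
    (hTfin : (pdom T).Finite) :
    ∀ i : Index,
      (i ∈ upSet (pdom T) → extendFun (updateMap m T) i = extendFun T i) ∧
      (i ∉ upSet (pdom T) → extendFun (updateMap m T) i = extendFun m i) :=
  stmt5_general m T hTfin
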